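/- arXiv:1108.1525 — 10 statements merged into one kernel-verified Lean document; each statement's English description precedes it below -/
import Mathlib

section
/- Let M be a σ-compact Hausdorff smooth manifold without boundary modeled on a finite-dimensional real normed space, let {U_i}_{i∈ι} be an open cover of M, and let F be a real Banach space. Suppose that for every pair of indices (i,j) we are given a function h_{ij} : M → F that is smooth on U_{ij}, and that h_{jk} − h_{ik} + h_{ij} = 0 holds on U_{ijk} for every triple of indices (i,j,k). Then there exist functions u_i : M → F, each smooth on U_i, such that h_{ij} = u_j − u_i holds on U_{ij} for every pair (i,j). -/
/-!
Choose a smooth partition of unity `ρ` subordinate to the cover and set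
`u i = ∑ₖ ρₖ • h k i`. On `U i ∩ U j` the cocycle identity gives `h k j - h k i = h i j` wherever
`ρₖ ≠ 0`, so `u j - u i = (∑ₖ ρₖ) • h i j = h i j`; smoothness of `u i` on `U i` holds because
each term `ρₖ • h k i` only matters near `tsupport ρₖ ⊆ U k`, where `h k i` is smooth.
-/

open scoped Manifold

namespace PartitionOfUnity

variable {ι X F : Type*} [TopologicalSpace X] [AddCommGroup F] [Module ℝ F] {s : Set X}

noncomputable def cechPrimitive (ρ : PartitionOfUnity ι X s) (h : ι → ι → X → F) (i : ι)
    (x : X) : F :=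
  ∑ᶠ k, ρ k x • h k i x

theorem finite_support_smul (ρ : PartitionOfUnity ι X s) (g : ι → F) (x : X) :
    (Function.support fun k ↦ ρ k x • g k).Finite :=
  (ρ.locallyFinite.point_finite x).subset (Function.support_smul_subset_left _ _)

theorem finsum_smul_const (ρ : PartitionOfUnity ι X s) {x : X} (hx : x ∈ s) (v : F) :
    ∑ᶠ k, ρ k x • v = v := by
  rw [← finsum_smul, ρ.sum_eq_one hx, one_smul]

theorem cechPrimitive_sub_cechPrimitive (ρ : PartitionOfUnity ι X s) {U : ι → Set X}
    (hρ : ρ.IsSubordinate U) {h : ι → ι → X → F}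
    (hcocycle : ∀ i j k, ∀ x ∈ U i ∩ U j ∩ U k, h j k x - h i k x + h i j x = 0)
    {i j : ι} {x : X} (hxs : x ∈ s) (hx : x ∈ U i ∩ U j) :
    ρ.cechPrimitive h j x - ρ.cechPrimitive h i x = h i j x := by
  have hterm : ∀ k, ρ k x • h k j x - ρ k x • h k i x = ρ k x • h i j x := by
    intro k
    by_cases hk : ρ k x = 0
    · simp [hk]
    have hxk : x ∈ U k := hρ k (subset_closure hk)
    have := hcocycle k i j x ⟨⟨hxk, hx.1⟩, hx.2⟩
    linear_combination (norm := module) -ρ k x • this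
  rw [cechPrimitive, cechPrimitive, ← finsum_sub_distrib (ρ.finite_support_smul _ x)
    (ρ.finite_support_smul _ x), finsum_congr hterm, ρ.finsum_smul_const hxs]

end PartitionOfUnity

namespace SmoothPartitionOfUnity

variable {ι E H M F : Type*} [NormedAddCommGroup E] [NormedSpace ℝ E] [TopologicalSpace H]
  {I : ModelWithCorners ℝ E H} [TopologicalSpace M] [ChartedSpace H M]
  [NormedAddCommGroup F] [NormedSpace ℝ F] {s : Set M}

theorem contMDiffOn_cechPrimitive (ρ : SmoothPartitionOfUnity ι I M s) {U : ι → Set M}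
    (hρ : ρ.IsSubordinate U) (hUopen : ∀ i, IsOpen (U i)) {h : ι → ι → M → F} {n : ℕ∞} {i : ι}
    (hsmooth : ∀ k, ContMDiffOn I 𝓘(ℝ, F) n (h k i) (U k ∩ U i)) :
    ContMDiffOn I 𝓘(ℝ, F) n (ρ.toPartitionOfUnity.cechPrimitive h i) (U i) := fun _ hx ↦
  (ρ.contMDiffAt_finsum fun k hk ↦ (hsmooth k).contMDiffAt
    (((hUopen k).inter (hUopen i)).mem_nhds ⟨hρ k hk, hx⟩)).contMDiffWithinAt

end SmoothPartitionOfUnity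

theorem cech_one_cocycle_is_coboundary_general
    {E : Type*} [NormedAddCommGroup E] [NormedSpace ℝ E] [FiniteDimensional ℝ E]
    {M : Type*} [TopologicalSpace M] [ChartedSpace E M]
    [IsManifold (𝓘(ℝ, E)) ((⊤ : ℕ∞) : WithTop ℕ∞) M] [SigmaCompactSpace M] [T2Space M]
    {ι : Type*} (U : ι → Set M) (hUopen : ∀ i, IsOpen (U i))
    (hUcover : (⋃ i, U i) = Set.univ)
    {F : Type*} [NormedAddCommGroup F] [NormedSpace ℝ F]
    (h : ι → ι → M → F)
    (hsmooth : ∀ i j, ContMDiffOn (𝓘(ℝ, E)) (𝓘(ℝ, F)) (⊤ : ℕ∞) (h i j) (U i ∩ U j))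
    (hcocycle : ∀ i j k, ∀ x ∈ U i ∩ U j ∩ U k, h j k x - h i k x + h i j x = 0) :
    ∃ u : ι → M → F,
      (∀ i, ContMDiffOn (𝓘(ℝ, E)) (𝓘(ℝ, F)) (⊤ : ℕ∞) (u i) (U i)) ∧
      ∀ i j, ∀ x ∈ U i ∩ U j, h i j x = u j x - u i x := by
  obtain ⟨ρ, hρ⟩ := SmoothPartitionOfUnity.exists_isSubordinate 𝓘(ℝ, E)
    isClosed_univ U hUopen hUcover.ge
  refine ⟨ρ.toPartitionOfUnity.cechPrimitive h, fun i ↦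
    ρ.contMDiffOn_cechPrimitive hρ hUopen fun k ↦ hsmooth k i, fun i j x hx ↦
    (ρ.toPartitionOfUnity.cechPrimitive_sub_cechPrimitive hρ hcocycle (Set.mem_univ x) hx).symm⟩

/-- On a σ-compact Hausdorff finite-dimensional smooth manifold, every smooth Banach-space-valued
Čech 1-cocycle relative to an open cover is a Čech coboundary: if `h j k - h i k + h i j = 0` on
triple intersections then there exist functions `u i`, smooth on `U i`, with
`h i j = u j - u i` on double intersections. -/
theorem cech_one_cocycle_is_coboundary
    {E : Type*} [NormedAddCommGroup E] [NormedSpace ℝ E] [FiniteDimensional ℝ E]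
    {M : Type*} [TopologicalSpace M] [ChartedSpace E M]
    [IsManifold (𝓘(ℝ, E)) ((⊤ : ℕ∞) : WithTop ℕ∞) M] [SigmaCompactSpace M] [T2Space M]
    {ι : Type*} (U : ι → Set M) (hUopen : ∀ i, IsOpen (U i))
    (hUcover : (⋃ i, U i) = Set.univ)
    {F : Type*} [NormedAddCommGroup F] [NormedSpace ℝ F] [CompleteSpace F]
    (h : ι → ι → M → F)
    (hsmooth : ∀ i j, ContMDiffOn (𝓘(ℝ, E)) (𝓘(ℝ, F)) (⊤ : ℕ∞) (h i j) (U i ∩ U j))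
    (hcocycle : ∀ i j k, ∀ x ∈ U i ∩ U j ∩ U k, h j k x - h i k x + h i j x = 0) :
    ∃ u : ι → M → F,
      (∀ i, ContMDiffOn (𝓘(ℝ, E)) (𝓘(ℝ, F)) (⊤ : ℕ∞) (u i) (U i)) ∧
      ∀ i j, ∀ x ∈ U i ∩ U j, h i j x = u j x - u i x :=
  cech_one_cocycle_is_coboundary_general U hUopen hUcover h hsmooth hcocycle
end

section
/- Let M be a set, φ : M → ℝ → M a map, and f : M → ℝ → ℝ → ℝ a function such that for all x ∈ M and t, t′, t″ ∈ ℝ the cocycle identity f(φ(x,t), t′, t″) − f(x, t+t′, t″) + f(x, t, t′+t″) − f(x, t, t′) = 0 holds, and such that for all x ∈ M and t ∈ ℝ the function u ↦ f(x,t,u) is differentiable. Define k(x,t) to be the derivative of u ↦ f(x,t,u) at u = 0. Then for all x ∈ M and t, t′ ∈ ℝ: k(x, t+t′) − k(φ(x,t), t′) equals the derivative of u ↦ f(x,t,u) at u = t′. -/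
theorem slice_eq_of_cocycle {M : Type*} {φ : M → ℝ → M} {f : M → ℝ → ℝ → ℝ}
    (hcocycle : ∀ (x : M) (t t' t'' : ℝ),
      f (φ x t) t' t'' - f x (t + t') t'' + f x t (t' + t'') - f x t t' = 0)
    (x : M) (t t' : ℝ) :
    f x (t + t') = fun u => f (φ x t) t' u + f x t (t' + u) - f x t t' := by
  funext u
  linarith [hcocycle x t t' u]

/-- Differentiating the groupoid 2-cocycle identity
`f(φ(x,t),t',t'') − f(x,t+t',t'') + f(x,t,t'+t'') − f(x,t,t') = 0` with respect to `t''` at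
`t'' = 0`: with `k(x,t)` the derivative of `u ↦ f(x,t,u)` at `0`, one has
`k(x,t+t') − k(φ(x,t),t') = (d/du)|_{u=t'} f(x,t,u)`. -/
theorem flow_cocycle_derivative_relation
    {M : Type*} (φ : M → ℝ → M) (f : M → ℝ → ℝ → ℝ)
    (hcocycle : ∀ (x : M) (t t' t'' : ℝ),
      f (φ x t) t' t'' - f x (t + t') t'' + f x t (t' + t'') - f x t t' = 0)
    (hdiff : ∀ (x : M) (t : ℝ), Differentiable ℝ (f x t))
    (k : M → ℝ → ℝ) (hk : ∀ (x : M) (t : ℝ), k x t = deriv (f x t) 0) :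
    ∀ (x : M) (t t' : ℝ), k x (t + t') - k (φ x t) t' = deriv (f x t) t' := by
  intro x t t'
  have hshift : DifferentiableAt ℝ (fun u => f x t (t' + u)) 0 :=
    (hdiff x t).differentiableAt.comp 0 (differentiableAt_id.const_add t')
  have hslice : deriv (f x (t + t')) 0 = deriv (f (φ x t) t') 0 + deriv (f x t) t' := by
    rw [slice_eq_of_cocycle hcocycle, deriv_sub_const,
      deriv_fun_add (hdiff (φ x t) t').differentiableAt hshift, deriv_comp_const_add, add_zero]
  rw [hk, hk, hslice]
  ring
end

section
/- Let M be a set, φ : M → ℝ → M a map, and f : M → ℝ → ℝ → ℝ a function such that: (i) for all x, t, t′, t″: f(φ(x,t), t′, t″) − f(x, t+t′, t″) + f(x, t, t′+t″) − f(x, t, t′) = 0; (ii) f(x,t,0) = 0 for all x, t; and (iii) for each x ∈ M the function (t,u) ↦ f(x,t,u) is continuously differentiable on ℝ². Let k(x,t) be the derivative of u ↦ f(x,t,u) at u = 0 and define h(x,t) = −∫₀ᵗ k(x,s) ds. Then for all x ∈ M and t, t′ ∈ ℝ: h(φ(x,t), t′) − h(x, t+t′) + h(x,t) = f(x,t,t′).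 -/
/-!
Differentiating the cocycle identity in `t''` at `0` gives
`∂ᵤ f(x,t,u) = k(x,t+u) − k(φ(x,t),u)`. Since `f(x,t,0) = 0`, integrating this from `0` to `t'`
writes `f(x,t,t')` as `H(x,t+t') − H(x,t) − H(φ(x,t),t')` with `H(x,t) = ∫₀ᵗ k(x,s) ds = −h(x,t)`.
-/

open intervalIntegral

section PartialDerivative

variable {E : Type*} [NormedAddCommGroup E] [NormedSpace ℝ E] {F : ℝ × ℝ → E}

theorem deriv_snd_eq_fderiv_apply {t u : ℝ} (hF : DifferentiableAt ℝ F (t, u)) :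
    deriv (fun v => F (t, v)) u = fderiv ℝ F (t, u) (0, 1) :=
  (hF.hasFDerivAt.comp_hasDerivAt u
    ((hasDerivAt_const u t).prodMk (hasDerivAt_id u))).deriv

theorem hasDerivAt_deriv_snd {t u : ℝ} (hF : DifferentiableAt ℝ F (t, u)) :
    HasDerivAt (fun v => F (t, v)) (deriv (fun v => F (t, v)) u) u :=
  (hF.comp u ((differentiableAt_const t).prodMk differentiableAt_id)).hasDerivAt

theorem ContDiff.continuous_deriv_snd (hF : ContDiff ℝ 1 F) (u : ℝ) :
    Continuous fun t => deriv (fun v => F (t, v)) u := by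
  simp_rw [deriv_snd_eq_fderiv_apply (hF.differentiable one_ne_zero _)]
  exact ((hF.continuous_fderiv one_ne_zero).comp
    (continuous_id.prodMk continuous_const)).clm_apply continuous_const

end PartialDerivative

section FlowCocycle

variable {M : Type*} {φ : M → ℝ → M} {f : M → ℝ → ℝ → ℝ} {k : M → ℝ → ℝ}

theorem hasDerivAt_of_flow_cocycle
    (hcocycle : ∀ (x : M) (t t' t'' : ℝ),
      f (φ x t) t' t'' - f x (t + t') t'' + f x t (t' + t'') - f x t t' = 0)
    (hk : ∀ x t, HasDerivAt (f x t) (k x t) 0) (x : M) (t s : ℝ) :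
    HasDerivAt (f x t) (k x (t + s) - k (φ x t) s) s := by
  have hshift : f x t = fun u => f x t s + f x (t + s) (u - s) - f (φ x t) s (u - s) := by
    funext u
    have := hcocycle x t s (u - s)
    rw [add_sub_cancel] at this
    linarith
  have hk_shift : ∀ y r, HasDerivAt (fun u => f y r (u - s)) (k y r) s := fun y r =>
    HasDerivAt.comp_sub_const s s (by simpa using hk y r)
  rw [hshift, ← zero_add (k x (t + s))]
  exact ((hasDerivAt_const s _).add (hk_shift x (t + s))).sub (hk_shift (φ x t) s)

theorem eq_integral_sub_integral_of_flow_cocycle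
    (hcocycle : ∀ (x : M) (t t' t'' : ℝ),
      f (φ x t) t' t'' - f x (t + t') t'' + f x t (t' + t'') - f x t t' = 0)
    (hzero : ∀ x t, f x t 0 = 0)
    (hk : ∀ x t, HasDerivAt (f x t) (k x t) 0) (hk_cont : ∀ x, Continuous (k x))
    (x : M) (t t' : ℝ) :
    f x t t' = (∫ s in (0 : ℝ)..t + t', k x s) - (∫ s in (0 : ℝ)..t, k x s)
      - ∫ s in (0 : ℝ)..t', k (φ x t) s := by
  have hk_int : ∀ y a b, IntervalIntegrable (k y) MeasureTheory.volume a b := fun y _ _ =>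
    (hk_cont y).intervalIntegrable _ _
  have hk_comp : Continuous fun s => k x (t + s) := (hk_cont x).comp (continuous_const_add t)
  have hftc := integral_eq_sub_of_hasDerivAt
    (fun s _ => hasDerivAt_of_flow_cocycle hcocycle hk x t s)
    ((hk_comp.sub (hk_cont (φ x t))).intervalIntegrable 0 t')
  rw [hzero, sub_zero, integral_sub (hk_comp.intervalIntegrable 0 t') (hk_int _ 0 t'),
    integral_comp_add_left (k x), add_zero,
    ← integral_interval_sub_left (hk_int x 0 (t + t')) (hk_int x 0 t)] at hftc
  exact hftc.symm

end FlowCocycle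

/-- Every local 2-cocycle over a flow is a coboundary: if `f` satisfies the cocycle identity
`f(φ(x,t),t',t'') − f(x,t+t',t'') + f(x,t,t'+t'') − f(x,t,t') = 0`, vanishes at `u = 0`, and is
continuously differentiable in `(t,u)`, then the 1-cochain `h(x,t) = −∫₀ᵗ k(x,s) ds`, where
`k(x,t)` is the derivative of `u ↦ f(x,t,u)` at `0`, satisfies
`h(φ(x,t),t') − h(x,t+t') + h(x,t) = f(x,t,t')`. -/
theorem flow_two_cocycle_is_coboundary
    {M : Type*} (φ : M → ℝ → M) (f : M → ℝ → ℝ → ℝ)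
    (hcocycle : ∀ (x : M) (t t' t'' : ℝ),
      f (φ x t) t' t'' - f x (t + t') t'' + f x t (t' + t'') - f x t t' = 0)
    (hzero : ∀ (x : M) (t : ℝ), f x t 0 = 0)
    (hC1 : ∀ x : M, ContDiff ℝ 1 (fun p : ℝ × ℝ => f x p.1 p.2))
    (k : M → ℝ → ℝ) (hk : ∀ (x : M) (t : ℝ), k x t = deriv (f x t) 0)
    (h : M → ℝ → ℝ) (hh : ∀ (x : M) (t : ℝ), h x t = -∫ s in (0 : ℝ)..t, k x s) :
    ∀ (x : M) (t t' : ℝ), h (φ x t) t' - h x (t + t') + h x t = f x t t' := by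
  have hk_deriv : ∀ x t, HasDerivAt (f x t) (k x t) 0 := fun x t => by
    rw [hk]
    exact hasDerivAt_deriv_snd ((hC1 x).differentiable one_ne_zero _)
  have hk_cont : ∀ x, Continuous (k x) := fun x => by
    simpa only [← hk] using (hC1 x).continuous_deriv_snd 0
  intro x t t'
  rw [hh, hh, hh, eq_integral_sub_integral_of_flow_cocycle hcocycle hzero hk_deriv hk_cont]
  ring
end

section
/- Let M be a set, φ : M → ℝ → M a map, and f : M → ℝ → ℝ a function such that: (i) f(x,0) = 0 for all x; (ii) f(φ(x,t), t′) − f(x, t+t′) + f(x,t) = 0 for all x, t, t′; and (iii) for each x the function t ↦ f(x,t) is continuously differentiable. Define h(x) to be the derivative of t ↦ f(x,t) at t = 0. Then f(x,t) = ∫₀ᵗ h(φ(x,s)) ds for all x ∈ M and t ∈ ℝ. In particular, f is uniquely determined by h. -/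
/-! The cocycle identity says `f (φ x s) = f x (s + ·) - f x s`, so differentiating at `0` gives
`h (φ x s) = (f x)' s`; the fundamental theorem of calculus and `f x 0 = 0` then give
`f x t = ∫₀ᵗ h (φ x s) ds`. -/

theorem deriv_cocycle_apply_flow {M E : Type*} [NormedAddCommGroup E] [NormedSpace ℝ E]
    (φ : M → ℝ → M) (f : M → ℝ → E)
    (hcocycle : ∀ (x : M) (t t' : ℝ), f (φ x t) t' - f x (t + t') + f x t = 0) (x : M) (s : ℝ) :
    deriv (f (φ x s)) 0 = deriv (f x) s := by
  have hshift : f (φ x s) = fun t' => f x (s + t') - f x s := funext fun t' =>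
    eq_sub_of_add_eq <| sub_eq_zero.mp <| (sub_add_eq_add_sub _ _ _).symm.trans (hcocycle x s t')
  rw [hshift, deriv_sub_const, deriv_comp_const_add, add_zero]

/-- A 1-parameter cocycle over a flow is recovered from its derivative at time `0` by
integration along the flow: if `f(x,0) = 0`, `f(φ(x,t),t') − f(x,t+t') + f(x,t) = 0`, and
`t ↦ f(x,t)` is continuously differentiable, then with `h(x) = (d/dt)|₀ f(x,t)` one has
`f(x,t) = ∫₀ᵗ h(φ(x,s)) ds`; in particular `f` is uniquely determined by `h`. -/
theorem flow_one_cocycle_determined_by_derivative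
    {M : Type*} (φ : M → ℝ → M) (f : M → ℝ → ℝ)
    (hzero : ∀ x : M, f x 0 = 0)
    (hcocycle : ∀ (x : M) (t t' : ℝ), f (φ x t) t' - f x (t + t') + f x t = 0)
    (hC1 : ∀ x : M, ContDiff ℝ 1 (f x))
    (h : M → ℝ) (hh : ∀ x : M, h x = deriv (f x) 0) :
    ∀ (x : M) (t : ℝ), f x t = ∫ s in (0 : ℝ)..t, h (φ x s) := by
  intro x t
  have h_flow : (fun s => h (φ x s)) = deriv (f x) :=
    funext fun s => (hh _).trans (deriv_cocycle_apply_flow φ f hcocycle x s)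
  rw [h_flow, intervalIntegral.integral_deriv_eq_sub
    (fun s _ => (hC1 x).differentiable one_ne_zero s)
    (((hC1 x).continuous_deriv le_rfl).intervalIntegrable _ _), hzero, sub_zero]
end

section
/- Let E be a real normed vector space, ι an index set, {U_i}_{i∈ι} a family of open subsets of E, and V, W : E → E smooth vector fields. Suppose that for all indices i,j,k we are given a smooth 1-form ω_{ijk} : E → (E →L[ℝ] ℝ) that is closed on U_{ijk}, meaning fderiv ℝ ω_{ijk} x v w = fderiv ℝ ω_{ijk} x w v for all x ∈ U_{ijk} and v, w ∈ E, and smooth functions f_{ij}, g_{ij} : E → ℝ such that on every U_{ijk}: f_{jk} − f_{ik} + f_{ij} = ι_V ω_{ijk} and g_{jk} − g_{ik} + g_{ij} = ι_W ω_{ijk}, where (ι_V ω)(x) = ω(x)(V(x)). Then the functions F_{ij} = V·g_{ij} − W·f_{ij} satisfy, on every U_{ijk}: F_{jk} − F_{ik} + F_{ij} = ι_{[V,W]} ω_{ijk}. -/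
/-- The bracket of two Čech lifts is a Čech lift of the Lie bracket: given smooth vector fields
`V, W`, smooth 1-forms `ω i j k` closed on the triple intersections, and smooth functions
`f i j`, `g i j` trivializing `ι_V ω` resp. `ι_W ω` on triple intersections, the functions
`F i j = V·(g i j) − W·(f i j)` trivialize `ι_{[V,W]} ω` on triple intersections. -/
theorem cech_bracket_lifts_lie_bracket
    {E : Type*} [NormedAddCommGroup E] [NormedSpace ℝ E] {ι : Type*}
    (U : ι → Set E) (hUopen : ∀ i, IsOpen (U i))
    (V W : E → E) (hV : ContDiff ℝ (⊤ : ℕ∞) V) (hW : ContDiff ℝ (⊤ : ℕ∞) W)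
    (ω : ι → ι → ι → E → (E →L[ℝ] ℝ))
    (hωsmooth : ∀ i j k, ContDiff ℝ (⊤ : ℕ∞) (ω i j k))
    (hωclosed : ∀ i j k, ∀ x ∈ U i ∩ U j ∩ U k, ∀ v w : E,
      fderiv ℝ (ω i j k) x v w = fderiv ℝ (ω i j k) x w v)
    (f g : ι → ι → E → ℝ)
    (hfsmooth : ∀ i j, ContDiff ℝ (⊤ : ℕ∞) (f i j))
    (hgsmooth : ∀ i j, ContDiff ℝ (⊤ : ℕ∞) (g i j))
    (hfrel : ∀ i j k, ∀ x ∈ U i ∩ U j ∩ U k,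
      f j k x - f i k x + f i j x = ω i j k x (V x))
    (hgrel : ∀ i j k, ∀ x ∈ U i ∩ U j ∩ U k,
      g j k x - g i k x + g i j x = ω i j k x (W x)) :
    ∀ i j k, ∀ x ∈ U i ∩ U j ∩ U k,
      (fderiv ℝ (g j k) x (V x) - fderiv ℝ (f j k) x (W x)) -
        (fderiv ℝ (g i k) x (V x) - fderiv ℝ (f i k) x (W x)) +
        (fderiv ℝ (g i j) x (V x) - fderiv ℝ (f i j) x (W x)) =
      ω i j k x (fderiv ℝ W x (V x) - fderiv ℝ V x (W x)) := by
  intro i j k x hx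
  have hS : IsOpen (U i ∩ U j ∩ U k) := ((hUopen i).inter (hUopen j)).inter (hUopen k)
  have hmem : (U i ∩ U j ∩ U k) ∈ nhds x := hS.mem_nhds hx
  have hωd : DifferentiableAt ℝ (ω i j k) x :=
    ((hωsmooth i j k).differentiable (by simp)).differentiableAt
  have hVd : DifferentiableAt ℝ V x := (hV.differentiable (by simp)).differentiableAt
  have hWd : DifferentiableAt ℝ W x := (hW.differentiable (by simp)).differentiableAt
  have dfa : ∀ a b, DifferentiableAt ℝ (f a b) x := fun a b =>
    ((hfsmooth a b).differentiable (by simp)).differentiableAt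
  have dga : ∀ a b, DifferentiableAt ℝ (g a b) x := fun a b =>
    ((hgsmooth a b).differentiable (by simp)).differentiableAt
  have hg : (fun y => g j k y - g i k y + g i j y) =ᶠ[nhds x] (fun y => ω i j k y (W y)) :=
    Filter.eventuallyEq_of_mem hmem (fun y hy => hgrel i j k y hy)
  have hf : (fun y => f j k y - f i k y + f i j y) =ᶠ[nhds x] (fun y => ω i j k y (V y)) :=
    Filter.eventuallyEq_of_mem hmem (fun y hy => hfrel i j k y hy)
  have hdg : fderiv ℝ (fun y => g j k y - g i k y + g i j y) x
      = fderiv ℝ (fun y => ω i j k y (W y)) x := hg.fderiv_eq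
  have hdf : fderiv ℝ (fun y => f j k y - f i k y + f i j y) x
      = fderiv ℝ (fun y => ω i j k y (V y)) x := hf.fderiv_eq
  have Dg : fderiv ℝ (fun y => g j k y - g i k y + g i j y) x
      = fderiv ℝ (g j k) x - fderiv ℝ (g i k) x + fderiv ℝ (g i j) x := by
    rw [fderiv_fun_add (show DifferentiableAt ℝ (fun y => g j k y - g i k y) x from (dga j k).sub (dga i k)) (dga i j), fderiv_fun_sub (dga j k) (dga i k)]
  have Df : fderiv ℝ (fun y => f j k y - f i k y + f i j y) x
      = fderiv ℝ (f j k) x - fderiv ℝ (f i k) x + fderiv ℝ (f i j) x := by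
    rw [fderiv_fun_add (show DifferentiableAt ℝ (fun y => f j k y - f i k y) x from (dfa j k).sub (dfa i k)) (dfa i j), fderiv_fun_sub (dfa j k) (dfa i k)]
  have DωW : fderiv ℝ (fun y => ω i j k y (W y)) x
      = (ω i j k x).comp (fderiv ℝ W x) + (fderiv ℝ (ω i j k) x).flip (W x) :=
    fderiv_clm_apply hωd hWd
  have DωV : fderiv ℝ (fun y => ω i j k y (V y)) x
      = (ω i j k x).comp (fderiv ℝ V x) + (fderiv ℝ (ω i j k) x).flip (V x) :=
    fderiv_clm_apply hωd hVd
  have hgV : fderiv ℝ (g j k) x (V x) - fderiv ℝ (g i k) x (V x) + fderiv ℝ (g i j) x (V x)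
      = ω i j k x (fderiv ℝ W x (V x)) + fderiv ℝ (ω i j k) x (V x) (W x) := by
    have := congrFun (congrArg (fun L => (L : E →L[ℝ] ℝ).toFun) (Dg.symm.trans (hdg.trans DωW)))
      (V x)
    simpa using this
  have hfW : fderiv ℝ (f j k) x (W x) - fderiv ℝ (f i k) x (W x) + fderiv ℝ (f i j) x (W x)
      = ω i j k x (fderiv ℝ V x (W x)) + fderiv ℝ (ω i j k) x (W x) (V x) := by
    have := congrFun (congrArg (fun L => (L : E →L[ℝ] ℝ).toFun) (Df.symm.trans (hdf.trans DωV)))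
      (W x)
    simpa using this
  have hcl := hωclosed i j k x hx (V x) (W x)
  rw [map_sub]
  linarith [hgV, hfW, hcl]
end

section
/- Let E be a real normed vector space and φ : E → ℝ → E a map such that for each t ∈ ℝ the map y ↦ φ(y,t) is differentiable. Let A : E → ℝ → (E →L[ℝ] ℝ) satisfy: (i) A(x,0) = 0 for all x; (ii) the cocycle identity (A(φ(x,t), t′)).comp(fderiv ℝ (y ↦ φ(y,t)) x) − A(x, t+t′) + A(x,t) = 0 for all x, t, t′; and (iii) for each x the map t ↦ A(x,t) is differentiable into E →L[ℝ] ℝ. Define α(x) to be the derivative of t ↦ A(x,t) at t = 0. Then for all x and t, the derivative of s ↦ A(x,s) at s = t equals (α(φ(x,t))).comp(fderiv ℝ (y ↦ φ(y,t)) x). -/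
/-- Differentiating a relative-1-form cocycle over a flow: if `A(x,0) = 0`, `A` satisfies the
cocycle identity `A(φ(x,t),t') ∘ D(φ_t)(x) − A(x,t+t') + A(x,t) = 0`, and `t ↦ A(x,t)` is
differentiable, then with `α(x) = (d/dt)|₀ A(x,t)` one has
`(d/ds)|_{s=t} A(x,s) = α(φ(x,t)) ∘ D(φ_t)(x)`. -/
theorem relative_one_form_cocycle_derivative
    {E : Type*} [NormedAddCommGroup E] [NormedSpace ℝ E]
    (φ : E → ℝ → E) (hφ : ∀ t : ℝ, Differentiable ℝ (fun y => φ y t))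
    (A : E → ℝ → (E →L[ℝ] ℝ))
    (hzero : ∀ x : E, A x 0 = 0)
    (hcocycle : ∀ (x : E) (t t' : ℝ),
      (A (φ x t) t').comp (fderiv ℝ (fun y => φ y t) x) - A x (t + t') + A x t = 0)
    (hdiff : ∀ x : E, Differentiable ℝ (A x))
    (α : E → (E →L[ℝ] ℝ)) (hα : ∀ x : E, α x = deriv (A x) 0) :
    ∀ (x : E) (t : ℝ),
      deriv (A x) t = (α (φ x t)).comp (fderiv ℝ (fun y => φ y t) x) := by
  intro x t
  set L := fderiv ℝ (fun y => φ y t) x with hL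
  have key : ∀ t', A x (t + t') = (A (φ x t) t').comp L + A x t := by
    intro t'
    have h := hcocycle x t t'
    rw [sub_add_eq_add_sub, sub_eq_zero] at h
    exact h.symm
  have h1 : HasDerivAt (A (φ x t)) (α (φ x t)) 0 := by
    rw [hα]; exact (hdiff (φ x t) 0).hasDerivAt
  have h2 : HasDerivAt (fun t' => (A (φ x t) t').comp L) ((α (φ x t)).comp L) 0 := by
    have := h1.clm_comp (hasDerivAt_const (0 : ℝ) L)
    simpa [hzero] using this
  have h3 : HasDerivAt (fun t' => A x (t + t')) ((α (φ x t)).comp L) 0 := by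
    have := h2.add_const (A x t)
    simpa [← key] using this
  have h4 : HasDerivAt (A x) ((α (φ x t)).comp L) t := by
    have hs : HasDerivAt (fun s : ℝ => s - t) 1 t := (hasDerivAt_id t).sub_const t
    have := h3.scomp_of_eq t hs (by ring)
    simpa [Function.comp_def] using this
  exact h4.deriv
end

section
/- Let E be a real normed vector space and φ : E → ℝ → E a map such that for each t ∈ ℝ the map y ↦ φ(y,t) is differentiable. Let A : E → ℝ → (E →L[ℝ] ℝ) satisfy: (i) A(x,0) = 0 for all x; (ii) the cocycle identity (A(φ(x,t), t′)).comp(fderiv ℝ (y ↦ φ(y,t)) x) − A(x, t+t′) + A(x,t) = 0 for all x, t, t′; and (iii) for each x the map t ↦ A(x,t) is continuously differentiable. Define α(x) to be the derivative of t ↦ A(x,t) at t = 0. Then A(x,t) = ∫₀ᵗ (α(φ(x,s))).comp(fderiv ℝ (y ↦ φ(y,s)) x) ds for all x and t. In particular, A is uniquely determined by α. -/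
/-!
Differentiating the cocycle identity `A(x, s + t') = A(φ(x,s), t') ∘ D(φ_s)(x) + A(x,s)` in `t'`
at `t' = 0` gives `∂ₛA(x,s) = α(φ(x,s)) ∘ D(φ_s)(x)`; since `A(x,0) = 0` and `s ↦ A(x,s)` is `C¹`,
the fundamental theorem of calculus recovers `A(x,t)` as the integral of this derivative.
-/

theorem HasDerivAt.of_comp_const_add {𝕜 F : Type*} [NontriviallyNormedField 𝕜]
    [NormedAddCommGroup F] [NormedSpace 𝕜 F] {f : 𝕜 → F} {f' : F} {s : 𝕜}
    (hf : HasDerivAt (fun t ↦ f (s + t)) f' 0) : HasDerivAt f f' s := by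
  have hshift := HasDerivAt.comp_const_add (-s) s (by rwa [neg_add_cancel])
  simpa only [add_neg_cancel_left] using hshift

theorem HasDerivAt.of_shift_eq_comp_add {𝕜 E F G : Type*} [NontriviallyNormedField 𝕜]
    [NormedAddCommGroup E] [NormedSpace 𝕜 E] [NormedAddCommGroup F] [NormedSpace 𝕜 F]
    [NormedAddCommGroup G] [NormedSpace 𝕜 G] {a : 𝕜 → E →L[𝕜] G} {b : 𝕜 → F →L[𝕜] G}
    {b' : F →L[𝕜] G} {L : E →L[𝕜] F} {s : 𝕜} (hb : HasDerivAt b b' 0)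
    (hshift : ∀ t, a (s + t) = (b t).comp L + a s) : HasDerivAt a (b'.comp L) s := by
  have hrhs : HasDerivAt (fun t ↦ (b t).comp L + a s) (b'.comp L) 0 := by
    simpa using (hb.clm_comp (hasDerivAt_const 0 L)).add_const (a s)
  exact HasDerivAt.of_comp_const_add (hrhs.congr_of_eventuallyEq (.of_forall hshift))

theorem relative_one_form_cocycle_determined_by_derivative_general
    {E : Type*} [NormedAddCommGroup E] [NormedSpace ℝ E]
    (φ : E → ℝ → E)
    (A : E → ℝ → (E →L[ℝ] ℝ))
    (hzero : ∀ x : E, A x 0 = 0)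
    (hcocycle : ∀ (x : E) (t t' : ℝ),
      (A (φ x t) t').comp (fderiv ℝ (fun y => φ y t) x) - A x (t + t') + A x t = 0)
    (hC1 : ∀ x : E, ContDiff ℝ 1 (A x))
    (α : E → (E →L[ℝ] ℝ)) (hα : ∀ x : E, α x = deriv (A x) 0) :
    ∀ (x : E) (t : ℝ),
      A x t = ∫ s in (0 : ℝ)..t, (α (φ x s)).comp (fderiv ℝ (fun y => φ y s) x) := by
  intro x t
  have hdiff : ∀ z, Differentiable ℝ (A z) := fun z ↦ (hC1 z).differentiable one_ne_zero
  have hderiv : ∀ s, deriv (A x) s = (α (φ x s)).comp (fderiv ℝ (fun y ↦ φ y s) x) := by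
    intro s
    refine (HasDerivAt.of_shift_eq_comp_add (b := A (φ x s)) ?_ fun t' ↦ ?_).deriv
    · rw [hα]
      exact (hdiff _ 0).hasDerivAt
    · rw [eq_comm, ← sub_eq_zero, ← hcocycle x s t']
      abel
  have hftc : ∫ s in (0 : ℝ)..t, deriv (A x) s = A x t - A x 0 :=
    intervalIntegral.integral_deriv_eq_sub (fun s _ ↦ hdiff x s)
      (((hC1 x).continuous_deriv le_rfl).intervalIntegrable 0 t)
  simp_rw [← hderiv, hftc, hzero, sub_zero]

/-- A relative-1-form cocycle over a flow is recovered from its derivative at time `0` by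
integrating the pulled-back 1-form along the flow: if `A(x,0) = 0`, `A` satisfies the cocycle
identity `A(φ(x,t),t') ∘ D(φ_t)(x) − A(x,t+t') + A(x,t) = 0`, and `t ↦ A(x,t)` is continuously
differentiable, then with `α(x) = (d/dt)|₀ A(x,t)` one has
`A(x,t) = ∫₀ᵗ α(φ(x,s)) ∘ D(φ_s)(x) ds`; in particular `A` is uniquely determined by `α`. -/
theorem relative_one_form_cocycle_determined_by_derivative
    {E : Type*} [NormedAddCommGroup E] [NormedSpace ℝ E]
    (φ : E → ℝ → E) (hφ : ∀ t : ℝ, Differentiable ℝ (fun y => φ y t))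
    (A : E → ℝ → (E →L[ℝ] ℝ))
    (hzero : ∀ x : E, A x 0 = 0)
    (hcocycle : ∀ (x : E) (t t' : ℝ),
      (A (φ x t) t').comp (fderiv ℝ (fun y => φ y t) x) - A x (t + t') + A x t = 0)
    (hC1 : ∀ x : E, ContDiff ℝ 1 (A x))
    (α : E → (E →L[ℝ] ℝ)) (hα : ∀ x : E, α x = deriv (A x) 0) :
    ∀ (x : E) (t : ℝ),
      A x t = ∫ s in (0 : ℝ)..t, (α (φ x s)).comp (fderiv ℝ (fun y => φ y s) x) :=
  relative_one_form_cocycle_determined_by_derivative_general φ A hzero hcocycle hC1 α hα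
end

section
/- Let E be a real normed vector space and φ : E → ℝ → E a map satisfying the flow law φ(φ(x,t), s) = φ(x, t+s) for all x, t, s, and such that for each t ∈ ℝ the map y ↦ φ(y,t) is differentiable. Let α : E → (E →L[ℝ] ℝ) be such that for each x the map s ↦ (α(φ(x,s))).comp(fderiv ℝ (y ↦ φ(y,s)) x) is continuous. Define A(x,t) = ∫₀ᵗ (α(φ(x,s))).comp(fderiv ℝ (y ↦ φ(y,s)) x) ds. Then A(x,0) = 0 for all x, and A satisfies the cocycle identity (A(φ(x,t), t′)).comp(fderiv ℝ (y ↦ φ(y,t)) x) = A(x, t+t′) − A(x,t) for all x, t, t′. -/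
/-- Integrating a pulled-back 1-form along a flow produces a relative-1-form cocycle: if `φ`
satisfies the flow law, each time-`t` map is differentiable, and the pulled-back integrand is
continuous in time, then `A(x,t) = ∫₀ᵗ α(φ(x,s)) ∘ D(φ_s)(x) ds` satisfies `A(x,0) = 0` and the
cocycle identity `A(φ(x,t),t') ∘ D(φ_t)(x) = A(x,t+t') − A(x,t)`. -/
theorem integral_of_one_form_along_flow_is_cocycle
    {E : Type*} [NormedAddCommGroup E] [NormedSpace ℝ E]
    (φ : E → ℝ → E)
    (hflow : ∀ (x : E) (t s : ℝ), φ (φ x t) s = φ x (t + s))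
    (hφ : ∀ t : ℝ, Differentiable ℝ (fun y => φ y t))
    (α : E → (E →L[ℝ] ℝ))
    (hcont : ∀ x : E,
      Continuous fun s : ℝ => (α (φ x s)).comp (fderiv ℝ (fun y => φ y s) x))
    (A : E → ℝ → (E →L[ℝ] ℝ))
    (hA : ∀ (x : E) (t : ℝ),
      A x t = ∫ s in (0 : ℝ)..t, (α (φ x s)).comp (fderiv ℝ (fun y => φ y s) x)) :
    (∀ x : E, A x 0 = 0) ∧
    (∀ (x : E) (t t' : ℝ),
      (A (φ x t) t').comp (fderiv ℝ (fun y => φ y t) x) = A x (t + t') - A x t) := by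
  constructor
  · intro x
    rw [hA, intervalIntegral.integral_same]
  · intro x t t'
    set L : E →L[ℝ] E := fderiv ℝ (fun y => φ y t) x with hL
    set f : ℝ → (E →L[ℝ] ℝ) :=
      fun s => (α (φ x s)).comp (fderiv ℝ (fun y => φ y s) x) with hf
    set g : ℝ → (E →L[ℝ] ℝ) :=
      fun s => (α (φ (φ x t) s)).comp (fderiv ℝ (fun y => φ y s) (φ x t)) with hg
    have hfc : Continuous f := hcont x
    have hgc : Continuous g := hcont (φ x t)
    -- key pointwise identity
    have key : ∀ s : ℝ, (g s).comp L = f (t + s) := by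
      intro s
      have hchain : fderiv ℝ (fun y => φ y (t + s)) x
          = (fderiv ℝ (fun y => φ y s) (φ x t)).comp L := by
        have : (fun y => φ y (t + s)) = (fun y => φ y s) ∘ (fun y => φ y t) := by
          funext y
          simp [Function.comp, hflow]
        rw [this, fderiv_comp x (hφ s (φ x t)) (hφ t x)]
      simp only [hf, hg, hflow, hchain, ContinuousLinearMap.comp_assoc]
    -- move composition with L inside the integral
    have hM : ((ContinuousLinearMap.compL ℝ E E ℝ).flip L) ∘ g = fun s => (g s).comp L := by
      funext s; rfl
    have hcomp : (A (φ x t) t').comp L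
        = ∫ s in (0:ℝ)..t', (g s).comp L := by
      rw [hA]
      exact (ContinuousLinearMap.intervalIntegral_comp_comm
        ((ContinuousLinearMap.compL ℝ E E ℝ).flip L)
        (hgc.intervalIntegrable 0 t')).symm
    rw [hcomp]
    simp only [key]
    have : (∫ s in (0:ℝ)..t', f (t + s)) = ∫ s in t..(t + t'), f s := by
      rw [intervalIntegral.integral_comp_add_left f t]
      norm_num
    rw [this, hA, hA]
    rw [intervalIntegral.integral_interval_sub_left
      (hfc.intervalIntegrable 0 (t + t')) (hfc.intervalIntegrable 0 t)]
end

section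
/- Let E be a real normed vector space, {U_i}_{i∈ι} a family of open subsets of E, V, W : E → E vector fields, and for each pair (i,j) a 1-form A_{ij} : E → (E →L[ℝ] ℝ) that is differentiable on U_{ij}. Suppose a_i, b_i : E → (E →L[ℝ] ℝ) satisfy, on every U_{ij}: a_j(x) − a_i(x) = −dA_{ij}(x)(V(x), ·) and b_j(x) − b_i(x) = −dA_{ij}(x)(W(x), ·) (equalities of continuous linear functionals). Then for every x ∈ U_{ij}: b_j(x)(V(x)) + a_j(x)(W(x)) = b_i(x)(V(x)) + a_i(x)(W(x)). Hence the local functions x ↦ ½(b_i(x)(V(x)) + a_i(x)(W(x))) glue to a well-defined function on ⋃_i U_i. -/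
/-- The symmetric pairing on the generalized tangent bundle is well defined: if the local
1-forms `a i`, `b i` satisfy the transition relations `a j − a i = −ι_V dA_{ij}` and
`b j − b i = −ι_W dA_{ij}` on overlaps, then on every overlap
`b j (V) + a j (W) = b i (V) + a i (W)`; hence the local functions
`x ↦ ½(b i x (V x) + a i x (W x))` glue to a well-defined function on `⋃ i, U i`. -/
theorem generalized_tangent_pairing_well_defined
    {E : Type*} [NormedAddCommGroup E] [NormedSpace ℝ E] {ι : Type*}
    (U : ι → Set E) (hUopen : ∀ i, IsOpen (U i))
    (V W : E → E)
    (A : ι → ι → E → (E →L[ℝ] ℝ))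
    (hA : ∀ i j, DifferentiableOn ℝ (A i j) (U i ∩ U j))
    (a b : ι → E → (E →L[ℝ] ℝ))
    (ha : ∀ i j, ∀ x ∈ U i ∩ U j,
      a j x - a i x =
        -(fderiv ℝ (A i j) x (V x) - (fderiv ℝ (A i j) x).flip (V x)))
    (hb : ∀ i j, ∀ x ∈ U i ∩ U j,
      b j x - b i x =
        -(fderiv ℝ (A i j) x (W x) - (fderiv ℝ (A i j) x).flip (W x))) :
    (∀ i j, ∀ x ∈ U i ∩ U j,
      b j x (V x) + a j x (W x) = b i x (V x) + a i x (W x)) ∧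
    ∃ P : E → ℝ, ∀ i, ∀ x ∈ U i,
      P x = (1 / 2 : ℝ) * (b i x (V x) + a i x (W x)) := by

  have key : ∀ i j, ∀ x ∈ U i ∩ U j,
      b j x (V x) + a j x (W x) = b i x (V x) + a i x (W x) := by
    intro i j x hx
    have h1 := congrArg (fun f : E →L[ℝ] ℝ => f (V x)) (hb i j x hx)
    have h2 := congrArg (fun f : E →L[ℝ] ℝ => f (W x)) (ha i j x hx)
    simp only [ContinuousLinearMap.sub_apply, ContinuousLinearMap.neg_apply,
      ContinuousLinearMap.flip_apply] at h1 h2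
    linarith
  refine ⟨key, ?_⟩
  classical
  refine ⟨fun x => if h : ∃ i, x ∈ U i then
      (1 / 2 : ℝ) * (b h.choose x (V x) + a h.choose x (W x)) else 0, ?_⟩
  intro i x hx
  have h : ∃ i, x ∈ U i := ⟨i, hx⟩
  simp only [dif_pos h]
  have := key h.choose i x ⟨h.choose_spec, hx⟩
  rw [this]
end

section
/- Let E be a real normed vector space, {U_i}_{i∈ι} a family of open subsets of E, V, W : E → E smooth vector fields, and for each pair (i,j) a 1-form A_{ij} : E → (E →L[ℝ] ℝ) that is smooth on U_{ij}. Suppose a_i, b_i : E → (E →L[ℝ] ℝ) are smooth on U_i and satisfy, on every U_{ij}: a_j(x) − a_i(x) = −dA_{ij}(x)(V(x), ·) and b_j(x) − b_i(x) = −dA_{ij}(x)(W(x), ·). Define c_i = 𝓛_V b_i − 𝓛_W a_i − ½ d(ι_V b_i) + ½ d(ι_W a_i), where (ι_V b)(x) = b(x)(V(x)), d g(x) = fderiv ℝ g x for a scalar function g, and (𝓛_V b)(x)(w) = (fderiv ℝ b x (V x)) w + b(x)((fderiv ℝ V x) w). Then for every x ∈ U_{ij}: c_j(x) − c_i(x)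 = −dA_{ij}(x)([V,W](x), ·). Hence the Courant bracket of sections of the generalized tangent bundle is well defined. -/
open ContinuousLinearMap

set_option maxHeartbeats 1000000 in
/-- The Courant bracket on the generalized tangent bundle is well defined: if the local 1-forms
`a i`, `b i` (smooth on `U i`) satisfy the transition relations `a j − a i = −ι_V dA_{ij}` and
`b j − b i = −ι_W dA_{ij}` on overlaps, then the local 1-forms
`c i = 𝓛_V b i − 𝓛_W a i − ½ d(ι_V b i) + ½ d(ι_W a i)` satisfy the transition relation
`c j − c i = −ι_{[V,W]} dA_{ij}` on overlaps. -/
theorem courant_bracket_well_defined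
    {E : Type*} [NormedAddCommGroup E] [NormedSpace ℝ E] {ι : Type*}
    (U : ι → Set E) (hUopen : ∀ i, IsOpen (U i))
    (V W : E → E) (hV : ContDiff ℝ (⊤ : ℕ∞) V) (hW : ContDiff ℝ (⊤ : ℕ∞) W)
    (A : ι → ι → E → (E →L[ℝ] ℝ))
    (hA : ∀ i j, ContDiffOn ℝ (⊤ : ℕ∞) (A i j) (U i ∩ U j))
    (a b : ι → E → (E →L[ℝ] ℝ))
    (haSmooth : ∀ i, ContDiffOn ℝ (⊤ : ℕ∞) (a i) (U i))
    (hbSmooth : ∀ i, ContDiffOn ℝ (⊤ : ℕ∞) (b i) (U i))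
    (ha : ∀ i j, ∀ x ∈ U i ∩ U j,
      a j x - a i x =
        -(fderiv ℝ (A i j) x (V x) - (fderiv ℝ (A i j) x).flip (V x)))
    (hb : ∀ i j, ∀ x ∈ U i ∩ U j,
      b j x - b i x =
        -(fderiv ℝ (A i j) x (W x) - (fderiv ℝ (A i j) x).flip (W x)))
    (c : ι → E → (E →L[ℝ] ℝ))
    (hc : ∀ (i : ι) (x : E),
      c i x =
        (fderiv ℝ (b i) x (V x) + (b i x).comp (fderiv ℝ V x)) -
          (fderiv ℝ (a i) x (W x) + (a i x).comp (fderiv ℝ W x)) -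
          (1 / 2 : ℝ) • fderiv ℝ (fun y => b i y (V y)) x +
          (1 / 2 : ℝ) • fderiv ℝ (fun y => a i y (W y)) x) :
    ∀ i j, ∀ x ∈ U i ∩ U j,
      c j x - c i x =
        -(fderiv ℝ (A i j) x (fderiv ℝ W x (V x) - fderiv ℝ V x (W x)) -
            (fderiv ℝ (A i j) x).flip (fderiv ℝ W x (V x) - fderiv ℝ V x (W x))) := by
  intro i j x hx
  have hs : IsOpen (U i ∩ U j) := (hUopen i).inter (hUopen j)
  have hsnhds : U i ∩ U j ∈ nhds x := hs.mem_nhds hx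
  set P : E → (E →L[ℝ] (E →L[ℝ] ℝ)) := fderiv ℝ (A i j) with hPdef
  have hPc : ContDiffAt ℝ 1 P x :=
    ((hA i j).contDiffAt hsnhds).fderiv_right (WithTop.coe_le_coe.mpr le_top)
  set Q : E →L[ℝ] (E →L[ℝ] (E →L[ℝ] ℝ)) := fderiv ℝ P x with hQdef
  have hQ : HasFDerivAt P Q x := (hPc.differentiableAt one_ne_zero).hasFDerivAt
  have hAd : ∀ᶠ y in nhds x, HasFDerivAt (A i j) (P y) y := by
    filter_upwards [hs.eventually_mem hx] with y hy
    exact (((hA i j).contDiffAt (hs.mem_nhds hy)).differentiableAt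
      (by simp)).hasFDerivAt
  have hQsymm : ∀ u v w : E, Q u v w = Q v u w := fun u v w => by
    rw [second_derivative_symmetric_of_eventually hAd hQ u v]
  set DV : E →L[ℝ] E := fderiv ℝ V x with hDVdef
  set DW : E →L[ℝ] E := fderiv ℝ W x with hDWdef
  have hVx : HasFDerivAt V DV x := (hV.differentiable (by simp) x).hasFDerivAt
  have hWx : HasFDerivAt W DW x := (hW.differentiable (by simp) x).hasFDerivAt
  -- derivative of y ↦ (P y).flip (V y), via `apply` and `clm_comp`
  have hApV : HasFDerivAt (fun y => ContinuousLinearMap.apply ℝ ℝ (V y))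
      ((ContinuousLinearMap.apply ℝ ℝ (E := E)).comp DV) x := by
    have h1 : HasFDerivAt (⇑(ContinuousLinearMap.apply ℝ ℝ (E := E)))
        (ContinuousLinearMap.apply ℝ ℝ (E := E)) (V x) := ContinuousLinearMap.hasFDerivAt _
    exact HasFDerivAt.comp (g := ⇑(ContinuousLinearMap.apply ℝ ℝ (E := E))) x h1 hVx
  have hApW : HasFDerivAt (fun y => ContinuousLinearMap.apply ℝ ℝ (W y))
      ((ContinuousLinearMap.apply ℝ ℝ (E := E)).comp DW) x := by
    have h1 : HasFDerivAt (⇑(ContinuousLinearMap.apply ℝ ℝ (E := E)))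
        (ContinuousLinearMap.apply ℝ ℝ (E := E)) (W x) := ContinuousLinearMap.hasFDerivAt _
    exact HasFDerivAt.comp (g := ⇑(ContinuousLinearMap.apply ℝ ℝ (E := E))) x h1 hWx
  have hGV : HasFDerivAt (fun y => (P y).flip (V y))
      ((compL ℝ E (E →L[ℝ] ℝ) ℝ (ContinuousLinearMap.apply ℝ ℝ (V x))).comp Q +
        ((compL ℝ E (E →L[ℝ] ℝ) ℝ).flip (P x)).comp
          ((ContinuousLinearMap.apply ℝ ℝ (E := E)).comp DV)) x := by
    have h := hApV.clm_comp hQ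
    refine h.congr_of_eventuallyEq (Filter.Eventually.of_forall fun y => ?_)
    ext u
    simp [ContinuousLinearMap.apply_apply, flip_apply]
  have hGW : HasFDerivAt (fun y => (P y).flip (W y))
      ((compL ℝ E (E →L[ℝ] ℝ) ℝ (ContinuousLinearMap.apply ℝ ℝ (W x))).comp Q +
        ((compL ℝ E (E →L[ℝ] ℝ) ℝ).flip (P x)).comp
          ((ContinuousLinearMap.apply ℝ ℝ (E := E)).comp DW)) x := by
    have h := hApW.clm_comp hQ
    refine h.congr_of_eventuallyEq (Filter.Eventually.of_forall fun y => ?_)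
    ext u
    simp [ContinuousLinearMap.apply_apply, flip_apply]
  have hFV : HasFDerivAt (fun y => P y (V y)) ((P x).comp DV + Q.flip (V x)) x :=
    hQ.clm_apply hVx
  have hFW : HasFDerivAt (fun y => P y (W y)) ((P x).comp DW + Q.flip (W x)) x :=
    hQ.clm_apply hWx
  set Da : E →L[ℝ] (E →L[ℝ] ℝ) :=
    -(((P x).comp DV + Q.flip (V x)) -
      ((compL ℝ E (E →L[ℝ] ℝ) ℝ (ContinuousLinearMap.apply ℝ ℝ (V x))).comp Q +
        ((compL ℝ E (E →L[ℝ] ℝ) ℝ).flip (P x)).comp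
          ((ContinuousLinearMap.apply ℝ ℝ (E := E)).comp DV))) with hDadef
  set Db : E →L[ℝ] (E →L[ℝ] ℝ) :=
    -(((P x).comp DW + Q.flip (W x)) -
      ((compL ℝ E (E →L[ℝ] ℝ) ℝ (ContinuousLinearMap.apply ℝ ℝ (W x))).comp Q +
        ((compL ℝ E (E →L[ℝ] ℝ) ℝ).flip (P x)).comp
          ((ContinuousLinearMap.apply ℝ ℝ (E := E)).comp DW))) with hDbdef
  have hda : HasFDerivAt (fun y => a j y - a i y) Da x := by
    refine HasFDerivAt.congr_of_eventuallyEq ((hFV.sub hGV).neg) ?_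
    filter_upwards [hsnhds] with y hy
    exact ha i j y hy
  have hdb : HasFDerivAt (fun y => b j y - b i y) Db x := by
    refine HasFDerivAt.congr_of_eventuallyEq ((hFW.sub hGW).neg) ?_
    filter_upwards [hsnhds] with y hy
    exact hb i j y hy
  have hai : HasFDerivAt (a i) (fderiv ℝ (a i) x) x :=
    (((haSmooth i).contDiffAt ((hUopen i).mem_nhds hx.1)).differentiableAt
      (by simp)).hasFDerivAt
  have hbi : HasFDerivAt (b i) (fderiv ℝ (b i) x) x :=
    (((hbSmooth i).contDiffAt ((hUopen i).mem_nhds hx.1)).differentiableAt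
      (by simp)).hasFDerivAt
  have haj : HasFDerivAt (a j) (fderiv ℝ (a i) x + Da) x := by
    have h := hai.add hda
    have he : a j = fun y => a i y + (a j y - a i y) := by funext y; abel
    rw [he]; exact h
  have hbj : HasFDerivAt (b j) (fderiv ℝ (b i) x + Db) x := by
    have h := hbi.add hdb
    have he : b j = fun y => b i y + (b j y - b i y) := by funext y; abel
    rw [he]; exact h
  have hbiV : HasFDerivAt (fun y => b i y (V y))
      ((b i x).comp DV + (fderiv ℝ (b i) x).flip (V x)) x := hbi.clm_apply hVx
  have haiW : HasFDerivAt (fun y => a i y (W y))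
      ((a i x).comp DW + (fderiv ℝ (a i) x).flip (W x)) x := hai.clm_apply hWx
  have hdbV : HasFDerivAt (fun y => (b j y - b i y) (V y))
      ((b j x - b i x).comp DV + Db.flip (V x)) x := hdb.clm_apply hVx
  have hdaW : HasFDerivAt (fun y => (a j y - a i y) (W y))
      ((a j x - a i x).comp DW + Da.flip (W x)) x := hda.clm_apply hWx
  have hbjV : HasFDerivAt (fun y => b j y (V y))
      (((b i x).comp DV + (fderiv ℝ (b i) x).flip (V x)) +
        ((b j x - b i x).comp DV + Db.flip (V x))) x := by
    have h := hbiV.add hdbV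
    have he : (fun y => b j y (V y)) = fun y => b i y (V y) + (b j y - b i y) (V y) := by
      funext y; simp
    rw [he]; exact h
  have hajW : HasFDerivAt (fun y => a j y (W y))
      (((a i x).comp DW + (fderiv ℝ (a i) x).flip (W x)) +
        ((a j x - a i x).comp DW + Da.flip (W x))) x := by
    have h := haiW.add hdaW
    have he : (fun y => a j y (W y)) = fun y => a i y (W y) + (a j y - a i y) (W y) := by
      funext y; simp
    rw [he]; exact h
  have hax := ha i j x hx
  have hbx := hb i j x hx
  rw [hc j x, hc i x, haj.fderiv, hbj.fderiv, hbjV.fderiv, hajW.fderiv,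
    hbiV.fderiv, haiW.fderiv]
  have hbx' : b j x = -(P x (W x) - (P x).flip (W x)) + b i x := sub_eq_iff_eq_add.mp hbx
  have hax' : a j x = -(P x (V x) - (P x).flip (V x)) + a i x := sub_eq_iff_eq_add.mp hax
  ext w
  have h1 := hQsymm (W x) (V x) w
  have h2 := hQsymm (V x) w (W x)
  have h3 := hQsymm (W x) w (V x)
  simp only [hDadef, hDbdef, hax, hbx, hax', hbx', ← hPdef, ← hDVdef, ← hDWdef,
    add_apply, sub_apply, neg_apply, smul_apply,
    coe_comp', Function.comp_apply, flip_apply, compL_apply, comp_apply,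
    ContinuousLinearMap.apply_apply, smul_eq_mul, map_sub]
  linear_combination h1 + h2 - h3
end
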